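/- Let X = (X_0, X_1, …, X_n) be a Gaussian vector with mean (m_0, m) ∈ ℝ^{n+1} and positive definite covariance matrix Σ, such that Σ(0,i) ≥ 0 for every i ∈ {1,…,n}. Then for every bounded non-decreasing measurable function φ : ℝ^n → ℝ, the map q ↦ E[φ(X_1,…,X_n) | X_0 = q] is non-decreasing in q. Similarly, if φ is non-increasing, this map is non-increasing. -/

import Mathlib

open MeasureTheory

/-- Density of the Gaussian distribution `N(m, S)` on `ι → ℝ` (for `S` positive definite). -/
noncomputable def gaussianPdf {ι : Type*} [Fintype ι] [DecidableEq ι]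
    (m : ι → ℝ) (S : Matrix ι ι ℝ) (x : ι → ℝ) : ℝ :=
  Real.exp (-(dotProduct (x - m) (Matrix.mulVec S⁻¹ (x - m))) / 2) /
    Real.sqrt ((2 * Real.pi) ^ (Fintype.card ι) * S.det)

/-- The Gaussian measure `N(m, S)` on `ι → ℝ`, defined via its density. -/
noncomputable def gaussianMeasure {ι : Type*} [Fintype ι] [DecidableEq ι]
    (m : ι → ℝ) (S : Matrix ι ι ℝ) : Measure (ι → ℝ) :=
  volume.withDensity fun x => ENNReal.ofReal (gaussianPdf m S x)

/-- The regular conditional distribution of `(X_1, …, X_n)` given `X_0 = q`, for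
`(X_0, X_1, …, X_n) ~ N((m_0, m), Σ)`: it is Gaussian with mean `m + (q − m_0)v`, where
`v_i = Σ(0,i)/Σ(0,0)`, and covariance `Σ(i,j) − Σ(0,i)Σ(0,j)/Σ(0,0)` (independent of `q`). -/
noncomputable def condGaussian (n : ℕ) (m₀ : ℝ) (m : Fin n → ℝ)
    (S : Matrix (Fin (n + 1)) (Fin (n + 1)) ℝ) (q : ℝ) : Measure (Fin n → ℝ) :=
  gaussianMeasure
    (fun i => m i + (q - m₀) * (S 0 i.succ / S 0 0))
    (Matrix.of fun i j => S i.succ j.succ - S 0 i.succ * S 0 j.succ / S 0 0)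

/-- The conditional expectation `E[φ(X_1,…,X_n) | X_0 = q]` computed with the regular
conditional (Gaussian) distribution. -/
noncomputable def condExpGaussian (n : ℕ) (m₀ : ℝ) (m : Fin n → ℝ)
    (S : Matrix (Fin (n + 1)) (Fin (n + 1)) ℝ) (φ : (Fin n → ℝ) → ℝ) (q : ℝ) : ℝ :=
  ∫ x, φ x ∂(condGaussian n m₀ m S q)

/-
Given `X₀ = q`, the vector `(X₁, …, Xₙ)` is Gaussian with a covariance `Γ` (the Schur complement
of `Σ(0,0)` in `Σ`) that does not depend on `q`, so its law is the fixed law `N(0, Γ)` translated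
by `m + (q - m₀) v`. Since `v = Σ(0,·)/Σ(0,0) ≥ 0`, this translation vector is coordinatewise
non-decreasing in `q`, hence so is `q ↦ ∫ φ (x + m + (q - m₀) v) dN(0, Γ)(x)` for non-decreasing
`φ`. Positive definiteness of `Γ` makes `N(0, Γ)` a finite measure, so bounded measurable `φ` are
integrable against it.
-/

section QuadraticForms

open Matrix Metric

lemma Matrix.cons_dotProduct_mulVec_cons {n : ℕ} (S : Matrix (Fin (n + 1)) (Fin (n + 1)) ℝ)
    (hS : S.IsSymm) (t : ℝ) (x : Fin n → ℝ) :
    (Fin.cons t x : Fin (n + 1) → ℝ) ⬝ᵥ S *ᵥ Fin.cons t x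
      = S 0 0 * t ^ 2 + 2 * t * ∑ i : Fin n, S 0 i.succ * x i
        + x ⬝ᵥ S.submatrix Fin.succ Fin.succ *ᵥ x := by
  have hsymm : ∀ i : Fin n, S i.succ 0 = S 0 i.succ := fun i => hS.apply 0 i.succ
  simp only [dotProduct, mulVec, Fin.sum_univ_succ, Fin.cons_zero, Fin.cons_succ, submatrix_apply,
    hsymm, mul_add, Finset.sum_add_distrib]
  have hcross : ∑ i, x i * (S 0 i.succ * t) = t * ∑ i, S 0 i.succ * x i := by
    rw [Finset.mul_sum]
    exact Finset.sum_congr rfl fun i _ => by ring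
  rw [hcross]
  ring

lemma dotProduct_mulVec_schurComplement_zero {n : ℕ} (S : Matrix (Fin (n + 1)) (Fin (n + 1)) ℝ)
    (x : Fin n → ℝ) :
    x ⬝ᵥ (Matrix.of fun i j : Fin n => S i.succ j.succ - S 0 i.succ * S 0 j.succ / S 0 0) *ᵥ x
      = x ⬝ᵥ S.submatrix Fin.succ Fin.succ *ᵥ x - (∑ i : Fin n, S 0 i.succ * x i) ^ 2 / S 0 0 := by
  simp only [dotProduct, mulVec, of_apply, submatrix_apply, sub_mul, Finset.sum_sub_distrib,
    mul_sub, sq, Finset.sum_mul, Finset.mul_sum, div_eq_mul_inv]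
  congr 1
  refine Finset.sum_congr rfl fun i _ => Finset.sum_congr rfl fun j _ => ?_
  ring

lemma Matrix.PosDef.schurComplement_zero {n : ℕ} {S : Matrix (Fin (n + 1)) (Fin (n + 1)) ℝ}
    (hS : S.PosDef) :
    (Matrix.of fun i j : Fin n => S i.succ j.succ - S 0 i.succ * S 0 j.succ / S 0 0).PosDef := by
  have hsymm : S.IsSymm := hS.isHermitian
  have h00 : 0 < S 0 0 := hS.diag_pos
  refine .of_dotProduct_mulVec_pos ?_ fun x hx => ?_
  · ext i j
    simp only [conjTranspose_apply, of_apply, star_trivial, hsymm.apply]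
    ring
  · set s := ∑ i : Fin n, S 0 i.succ * x i
    -- At `t = -s / S 0 0`, the minimiser in `t`, the form of `S` at `Fin.cons t x` equals the
    -- form of the Schur complement at `x`.
    have hy : (Fin.cons (-s / S 0 0) x : Fin (n + 1) → ℝ) ≠ 0 :=
      fun h => hx (congrArg Fin.tail h)
    have hpos := hS.dotProduct_mulVec_pos hy
    rw [star_trivial, cons_dotProduct_mulVec_cons S hsymm] at hpos
    rw [star_trivial, dotProduct_mulVec_schurComplement_zero]
    convert hpos using 1
    field_simp
    ring

lemma exists_pos_mul_norm_sq_le_of_homogeneous {E : Type*} [NormedAddCommGroup E]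
    [NormedSpace ℝ E] [FiniteDimensional ℝ E] {f : E → ℝ} (hf : Continuous f)
    (hsmul : ∀ (c : ℝ) x, f (c • x) = c ^ 2 * f x) (hpos : ∀ x ≠ 0, 0 < f x) :
    ∃ ε > 0, ∀ x, ε * ‖x‖ ^ 2 ≤ f x := by
  have hf0 : f 0 = 0 := by simpa using hsmul 0 0
  rcases subsingleton_or_nontrivial E with hE | hE
  · exact ⟨1, one_pos, fun x => by simp [Subsingleton.elim x 0, hf0]⟩
  obtain ⟨x₀, hx₀, hmin⟩ := (isCompact_sphere (0 : E) 1).exists_isMinOn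
    (NormedSpace.sphere_nonempty.2 zero_le_one) hf.continuousOn
  have hx₀ne : x₀ ≠ 0 := ne_zero_of_mem_unit_sphere ⟨x₀, hx₀⟩
  refine ⟨f x₀, hpos x₀ hx₀ne, fun x => ?_⟩
  rcases eq_or_ne x 0 with rfl | hx
  · simp [hf0]
  have hnorm : ‖x‖ ≠ 0 := norm_ne_zero_iff.2 hx
  have hunit : ‖x‖⁻¹ • x ∈ sphere (0 : E) 1 := by simp [norm_smul, hnorm]
  calc f x₀ * ‖x‖ ^ 2 ≤ f (‖x‖⁻¹ • x) * ‖x‖ ^ 2 := by gcongr; exact hmin hunit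
    _ = f x := by rw [hsmul]; field_simp

lemma Matrix.PosDef.exists_pos_mul_sum_sq_le {ι : Type*} [Fintype ι] {M : Matrix ι ι ℝ}
    (hM : M.PosDef) : ∃ ε > 0, ∀ x : ι → ℝ, ε * ∑ i, x i ^ 2 ≤ x ⬝ᵥ M *ᵥ x := by
  obtain ⟨ε, hε, h⟩ := exists_pos_mul_norm_sq_le_of_homogeneous
    (f := fun y : EuclideanSpace ℝ ι => y.ofLp ⬝ᵥ M *ᵥ y.ofLp) (by fun_prop)
    (fun c y => by simp only [WithLp.ofLp_smul, mulVec_smul, smul_dotProduct, dotProduct_smul,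
      smul_eq_mul]; ring)
    (fun y hy => by simpa using hM.dotProduct_mulVec_pos (x := y.ofLp) (by simpa using hy))
  refine ⟨ε, hε, fun x => ?_⟩
  simpa [EuclideanSpace.norm_sq_eq] using h (WithLp.toLp 2 x)

end QuadraticForms

section Gaussian

variable {ι : Type*} [Fintype ι] [DecidableEq ι]

lemma continuous_gaussianPdf (m : ι → ℝ) (A : Matrix ι ι ℝ) : Continuous (gaussianPdf m A) := by
  unfold gaussianPdf
  fun_prop

lemma integrable_gaussianPdf (m : ι → ℝ) {A : Matrix ι ι ℝ} (hA : A.PosDef) :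
    Integrable (gaussianPdf m A) := by
  obtain ⟨ε, hε, hq⟩ := hA.inv.exists_pos_mul_sum_sq_le
  have hprod : Integrable fun x : ι → ℝ => ∏ i, Real.exp (-(ε / 2) * (x i - m i) ^ 2) :=
    Integrable.fintype_prod (f := fun i t => Real.exp (-(ε / 2) * (t - m i) ^ 2))
      fun i => (integrable_exp_neg_mul_sq (by positivity)).comp_sub_right (m i)
  refine (hprod.const_mul (Real.sqrt ((2 * Real.pi) ^ Fintype.card ι * A.det))⁻¹).mono'
    (continuous_gaussianPdf m A).aestronglyMeasurable (ae_of_all _ fun x => ?_)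
  rw [Real.norm_of_nonneg (by unfold gaussianPdf; positivity), gaussianPdf, div_eq_inv_mul,
    ← Real.exp_sum, ← Finset.mul_sum]
  gcongr
  have hxm := hq (x - m)
  simp only [Pi.sub_apply] at hxm
  linarith

lemma isFiniteMeasure_gaussianMeasure (m : ι → ℝ) {A : Matrix ι ι ℝ} (hA : A.PosDef) :
    IsFiniteMeasure (gaussianMeasure m A) :=
  isFiniteMeasure_withDensity_ofReal (integrable_gaussianPdf m hA).hasFiniteIntegral

lemma integral_gaussianMeasure_eq_integral_add (m : ι → ℝ) (A : Matrix ι ι ℝ)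
    (φ : (ι → ℝ) → ℝ) :
    ∫ x, φ x ∂gaussianMeasure m A = ∫ x, φ (x + m) ∂gaussianMeasure 0 A := by
  have hpdf : ∀ x, gaussianPdf m A (x + m) = gaussianPdf 0 A x := fun x => by
    simp [gaussianPdf]
  have hmeas : ∀ m', Measurable fun x => ENNReal.ofReal (gaussianPdf m' A x) := fun m' =>
    (continuous_gaussianPdf m' A).measurable.ennreal_ofReal
  simp only [gaussianMeasure, integral_withDensity_eq_integral_toReal_smul (hmeas _)
    (ae_of_all _ fun _ => ENNReal.ofReal_lt_top)]
  rw [← integral_add_right_eq_self _ m]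
  simp only [hpdf]

end Gaussian

section Translation

variable {E : Type*} [MeasurableSpace E] [Add E] [MeasurableAdd E] {ν : Measure E}
  [IsFiniteMeasure ν] {φ : E → ℝ}

lemma integrable_comp_add_of_bound (hφ : Measurable φ) {C : ℝ} (hC : ∀ x, |φ x| ≤ C) (a : E) :
    Integrable (fun x => φ (x + a)) ν :=
  .of_bound (hφ.comp (measurable_add_const a)).aestronglyMeasurable C
    (ae_of_all _ fun x => hC (x + a))

lemma Monotone.integral_comp_add [Preorder E] [AddLeftMono E] (hmono : Monotone φ)
    (hφ : Measurable φ) (hbdd : ∃ C, ∀ x, |φ x| ≤ C) : Monotone fun a => ∫ x, φ (x + a) ∂ν := by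
  obtain ⟨C, hC⟩ := hbdd
  exact fun a b hab => integral_mono (integrable_comp_add_of_bound hφ hC a)
    (integrable_comp_add_of_bound hφ hC b) fun x => hmono (add_le_add_right hab x)

lemma Antitone.integral_comp_add [Preorder E] [AddLeftMono E] (hanti : Antitone φ)
    (hφ : Measurable φ) (hbdd : ∃ C, ∀ x, |φ x| ≤ C) : Antitone fun a => ∫ x, φ (x + a) ∂ν := by
  obtain ⟨C, hC⟩ := hbdd
  exact fun a b hab => integral_mono (integrable_comp_add_of_bound hφ hC b)
    (integrable_comp_add_of_bound hφ hC a) fun x => hanti (add_le_add_right hab x)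

end Translation

theorem stmt_2 (n : ℕ) (m₀ : ℝ) (m : Fin n → ℝ)
    (S : Matrix (Fin (n + 1)) (Fin (n + 1)) ℝ) (hS : S.PosDef)
    (hnn : ∀ i : Fin n, 0 ≤ S 0 i.succ)
    (φ : (Fin n → ℝ) → ℝ) (hφmeas : Measurable φ)
    (hφbdd : ∃ C : ℝ, ∀ x, |φ x| ≤ C) :
    (Monotone φ → Monotone (condExpGaussian n m₀ m S φ)) ∧
      (Antitone φ → Antitone (condExpGaussian n m₀ m S φ)) := by
  have := isFiniteMeasure_gaussianMeasure 0 hS.schurComplement_zero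
  have hmean : Monotone fun q i => m i + (q - m₀) * (S 0 i.succ / S 0 0) := fun a b hab i => by
    have : 0 ≤ S 0 i.succ / S 0 0 := div_nonneg (hnn i) hS.diag_pos.le
    dsimp only
    gcongr
  have hshift : condExpGaussian n m₀ m S φ = fun q =>
      ∫ x, φ (x + fun i => m i + (q - m₀) * (S 0 i.succ / S 0 0)) ∂gaussianMeasure 0
        (Matrix.of fun i j => S i.succ j.succ - S 0 i.succ * S 0 j.succ / S 0 0) :=
    funext fun q => integral_gaussianMeasure_eq_integral_add _ _ φ
  rw [hshift]
  exact ⟨fun h => (h.integral_comp_add hφmeas hφbdd).comp hmean,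
    fun h => (h.integral_comp_add hφmeas hφbdd).comp_monotone hmean⟩
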